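/- Fix p, q ∈ ℝ³. Regard h as a function of the symmetric positive definite 3×3 matrix A via h(A) = √(2 p⁰_A q⁰_A − 2 − 2 pᵀAq), where p⁰_A = √(1+pᵀAp), q⁰_A = √(1+qᵀAq). Then at every symmetric positive definite A with h(A) > 0, h is differentiable, and for every symmetric 3×3 matrix B the directional derivative equals Dh(A)[B] = (p⁰_A q⁰_A / (2h(A))) · uᵀBu, where u = p/p⁰_A − q/q⁰_A ∈ ℝ³. Consequently there is an absolute constant C such that for every orthonormal frame E for A, |Dh(A)[B]| ≤ C ‖e⁻¹‖² h(A) (p⁰_A q⁰_A)² max_{a,b}|B_{ab}|. -/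

import Mathlib

open Matrix Real

noncomputable section

/-- 3×3 real matrices. -/
abbrev Mat3 := Matrix (Fin 3) (Fin 3) ℝ
/-- Momentum vectors in ℝ³. -/
abbrev V3 := Fin 3 → ℝ

/-- The quadratic form `pᵀ A p`. -/
def quadG (A : Mat3) (p : V3) : ℝ := p ⬝ᵥ A *ᵥ p

/-- The energy `p⁰_A = √(1 + pᵀ A p)`. -/
def p0 (A : Mat3) (p : V3) : ℝ := Real.sqrt (1 + quadG A p)

/-- The relative momentum as a function of the matrix:
`h(A) = √(2 p⁰_A q⁰_A − 2 − 2 pᵀAq)`. -/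
def hm (p q : V3) (A : Mat3) : ℝ :=
  Real.sqrt (2 * p0 A p * p0 A q - 2 - 2 * (p ⬝ᵥ A *ᵥ q))

/-- The maximum of the absolute values of the entries of a matrix. -/
def entryNorm (M : Mat3) : ℝ := ⨆ i, ⨆ j, |M i j|

/-! Along `t ↦ A + t • B` the quantities `pᵀAp`, `qᵀAq`, `pᵀAq` are affine in `t`, so the
derivative comes from the chain rule, and its numerator is `p⁰q⁰ · uᵀBu`. For the bound, the
identity `uᵀAu = h²/(p⁰q⁰) - (1/p⁰ - 1/q⁰)²` gives `uᵀAu ≤ h²/(p⁰q⁰)`. A frame writes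
`u = Eᵀw` with `w = EAu` and `|w|² = uᵀAu`, so Cauchy–Schwarz gives `u_i² ≤ 3‖E‖² uᵀAu`, whence
`|uᵀBu| ≤ 27 ‖E‖² ‖B‖ h²/(p⁰q⁰)` and `|Dh(A)[B]| ≤ (27/2) ‖E‖² h ‖B‖ ≤ (27/2) ‖E‖² h (p⁰q⁰)² ‖B‖`. -/

lemma quadG_nonneg {A : Mat3} (hA : A.PosSemidef) (p : V3) : 0 ≤ quadG A p := by
  simpa [quadG] using hA.dotProduct_mulVec_nonneg p

lemma one_le_p0 {A : Mat3} (hA : A.PosSemidef) (p : V3) : 1 ≤ p0 A p :=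
  Real.one_le_sqrt.mpr (le_add_of_nonneg_right (quadG_nonneg hA p))

lemma p0_pos {A : Mat3} (hA : A.PosSemidef) (p : V3) : 0 < p0 A p :=
  zero_lt_one.trans_le (one_le_p0 hA p)

lemma sq_p0 {A : Mat3} (hA : A.PosSemidef) (p : V3) : p0 A p ^ 2 = 1 + quadG A p :=
  Real.sq_sqrt (by linarith [quadG_nonneg hA p])

lemma dotProduct_add_smul_mulVec {n : Type*} [Fintype n] {R : Type*} [CommSemiring R]
    (A B : Matrix n n R) (t : R) (p q : n → R) :
    p ⬝ᵥ (A + t • B) *ᵥ q = p ⬝ᵥ A *ᵥ q + t * (p ⬝ᵥ B *ᵥ q) := by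
  simp [add_mulVec, smul_mulVec, dotProduct_add, dotProduct_smul, smul_eq_mul]

lemma dotProduct_mulVec_comm_of_isSymm {n : Type*} [Fintype n] {R : Type*} [CommSemiring R]
    {B : Matrix n n R} (hB : B.IsSymm) (p q : n → R) :
    q ⬝ᵥ B *ᵥ p = p ⬝ᵥ B *ᵥ q := by
  rw [dotProduct_mulVec, ← mulVec_transpose, hB.eq, dotProduct_comm]

lemma quadG_sub_div {B : Mat3} (hB : B.IsSymm) (p q : V3) (s t : ℝ) :
    quadG B (fun i => p i / s - q i / t) =
      quadG B p / s ^ 2 - 2 * (p ⬝ᵥ B *ᵥ q) / (s * t) + quadG B q / t ^ 2 := by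
  have hsymm := dotProduct_mulVec_comm_of_isSymm hB p q
  simp only [quadG, dotProduct, mulVec, Fin.sum_univ_three] at hsymm ⊢
  linear_combination (-1 / (s * t)) * hsymm

lemma quadG_add_smul (A B : Mat3) (t : ℝ) (p : V3) :
    quadG (A + t • B) p = quadG A p + t * quadG B p :=
  dotProduct_add_smul_mulVec A B t p p

lemma hasDerivAt_p0_add_smul {A : Mat3} (hA : A.PosSemidef) (B : Mat3) (p : V3) :
    HasDerivAt (fun t : ℝ => p0 (A + t • B) p) (quadG B p / (2 * p0 A p)) 0 := by
  have hlin : HasDerivAt (fun t : ℝ => 1 + quadG (A + t • B) p) (quadG B p) 0 := by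
    simp only [quadG_add_smul, ← add_assoc]
    simpa using (hasDerivAt_mul_const (quadG B p)).const_add (1 + quadG A p)
  have hrad : 1 + quadG (A + (0 : ℝ) • B) p ≠ 0 := by
    rw [zero_smul, add_zero]; linarith [quadG_nonneg hA p]
  simpa [p0] using hlin.sqrt hrad

lemma hasDerivAt_dotProduct_add_smul_mulVec (A B : Mat3) (p q : V3) :
    HasDerivAt (fun t : ℝ => p ⬝ᵥ (A + t • B) *ᵥ q) (p ⬝ᵥ B *ᵥ q) 0 := by
  simp only [dotProduct_add_smul_mulVec]
  simpa using (hasDerivAt_mul_const (p ⬝ᵥ B *ᵥ q)).const_add (p ⬝ᵥ A *ᵥ q)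

lemma hasDerivAt_hm_add_smul {A B : Mat3} (hA : A.PosSemidef) (hB : B.IsSymm) {p q : V3}
    (hh : 0 < hm p q A) :
    HasDerivAt (fun t : ℝ => hm p q (A + t • B))
      (p0 A p * p0 A q / (2 * hm p q A) *
        quadG B (fun i => p i / p0 A p - q i / p0 A q)) 0 := by
  have hP := p0_pos hA p
  have hQ := p0_pos hA q
  have hrad : HasDerivAt
      (fun t : ℝ => 2 * p0 (A + t • B) p * p0 (A + t • B) q - 2 - 2 * (p ⬝ᵥ (A + t • B) *ᵥ q))
      (2 * (quadG B p / (2 * p0 A p)) * p0 A q + 2 * p0 A p * (quadG B q / (2 * p0 A q)) -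
        2 * (p ⬝ᵥ B *ᵥ q)) 0 := by
    have h := ((((hasDerivAt_p0_add_smul hA B p).const_mul 2).mul
      (hasDerivAt_p0_add_smul hA B q)).sub_const 2).sub
      ((hasDerivAt_dotProduct_add_smul_mulVec A B p q).const_mul 2)
    simp only [zero_smul, add_zero] at h
    exact h
  have hsqrt := hrad.sqrt (by simpa [hm] using (Real.sqrt_pos.mp hh).ne')
  simp only [zero_smul, add_zero] at hsqrt
  refine hsqrt.congr_deriv ?_
  rw [quadG_sub_div hB, ← hm]
  field_simp
  ring

lemma quadG_sub_div_p0 {A : Mat3} (hA : A.PosSemidef) (p q : V3) :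
    quadG A (fun i => p i / p0 A p - q i / p0 A q) =
      (2 * p0 A p * p0 A q - 2 - 2 * (p ⬝ᵥ A *ᵥ q)) / (p0 A p * p0 A q) -
        (1 / p0 A p - 1 / p0 A q) ^ 2 := by
  have hP := p0_pos hA p
  have hQ := p0_pos hA q
  rw [quadG_sub_div (isHermitian_iff_isSymm.mp hA.1), eq_sub_of_add_eq' (sq_p0 hA p).symm,
    eq_sub_of_add_eq' (sq_p0 hA q).symm]
  field_simp
  ring

-- The radicand is `p⁰q⁰ (uᵀAu + (1/p⁰ - 1/q⁰)²) ≥ 0`, so the square root in `hm` is never truncated.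
lemma sq_hm {A : Mat3} (hA : A.PosSemidef) (p q : V3) :
    hm p q A ^ 2 = 2 * p0 A p * p0 A q - 2 - 2 * (p ⬝ᵥ A *ᵥ q) := by
  have hPQ := mul_pos (p0_pos hA p) (p0_pos hA q)
  have hu := (quadG_nonneg hA _).trans_eq (quadG_sub_div_p0 hA p q)
  have hrad := (le_div_iff₀ hPQ).mp ((sq_nonneg _).trans (sub_nonneg.mp hu))
  exact Real.sq_sqrt (by simpa using hrad)

lemma quadG_sub_div_p0_le {A : Mat3} (hA : A.PosSemidef) (p q : V3) :
    quadG A (fun i => p i / p0 A p - q i / p0 A q) ≤ hm p q A ^ 2 / (p0 A p * p0 A q) := by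
  rw [quadG_sub_div_p0 hA, ← sq_hm hA]
  exact sub_le_self _ (sq_nonneg _)

section Frame

variable {n R : Type*} [Fintype n] [DecidableEq n] [CommRing R] {A E : Matrix n n R}

lemma transpose_mul_mul_eq_one_of_mul_mul_transpose_eq_one (hA : A.IsSymm)
    (hE : E * A * Eᵀ = 1) : Eᵀ * (E * A) = 1 := by
  have h : A * Eᵀ * E = 1 := by
    rw [mul_eq_one_comm, ← Matrix.mul_assoc, hE]
  simpa [Matrix.transpose_mul, Matrix.mul_assoc, hA.eq] using congrArg transpose h

lemma transpose_mulVec_mulVec_of_frame (hA : A.IsSymm) (hE : E * A * Eᵀ = 1) (u : n → R) :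
    Eᵀ *ᵥ ((E * A) *ᵥ u) = u := by
  rw [mulVec_mulVec, transpose_mul_mul_eq_one_of_mul_mul_transpose_eq_one hA hE, one_mulVec]

lemma dotProduct_mulVec_eq_of_frame (hA : A.IsSymm) (hE : E * A * Eᵀ = 1) (u : n → R) :
    u ⬝ᵥ A *ᵥ u = ((E * A) *ᵥ u) ⬝ᵥ ((E * A) *ᵥ u) := by
  have hA' : (E * A)ᵀ * (E * A) = A := by
    rw [Matrix.transpose_mul, hA.eq, Matrix.mul_assoc,
      transpose_mul_mul_eq_one_of_mul_mul_transpose_eq_one hA hE, Matrix.mul_one]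
  conv_lhs => rw [← hA', ← mulVec_mulVec, dotProduct_mulVec, vecMul_transpose]

end Frame

lemma abs_apply_le_entryNorm (M : Mat3) (i j : Fin 3) : |M i j| ≤ entryNorm M :=
  (le_ciSup (Set.finite_range fun j => |M i j|).bddAbove j).trans
    (le_ciSup (Set.finite_range fun i => ⨆ j, |M i j|).bddAbove i)

lemma entryNorm_nonneg (M : Mat3) : 0 ≤ entryNorm M :=
  (abs_nonneg _).trans (abs_apply_le_entryNorm M 0 0)

lemma sq_apply_le_of_frame {A E : Mat3} (hA : A.IsSymm) (hE : E * A * Eᵀ = 1) (u : V3)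
    (i : Fin 3) : u i ^ 2 ≤ 3 * entryNorm E ^ 2 * quadG A u := by
  set w := (E * A) *ᵥ u
  have hu : u i = ∑ j, E j i * w j := by
    conv_lhs => rw [← transpose_mulVec_mulVec_of_frame hA hE u]
    rfl
  have hE2 : ∀ j, E j i ^ 2 ≤ entryNorm E ^ 2 := fun j => by
    rw [← sq_abs]
    exact pow_le_pow_left₀ (abs_nonneg _) (abs_apply_le_entryNorm E j i) 2
  have hw : ∑ j, w j ^ 2 = quadG A u := by
    rw [quadG, dotProduct_mulVec_eq_of_frame hA hE u, dotProduct]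
    simp only [sq]
    rfl
  calc u i ^ 2 ≤ (∑ j, E j i ^ 2) * ∑ j, w j ^ 2 := hu ▸ Finset.sum_mul_sq_le_sq_mul_sq _ _ _
    _ ≤ (∑ _j : Fin 3, entryNorm E ^ 2) * ∑ j, w j ^ 2 := by
        gcongr ?_ * _
        exact Finset.sum_le_sum fun j _ => hE2 j
    _ = 3 * entryNorm E ^ 2 * quadG A u := by simp [hw]

lemma abs_quadG_le {M : ℝ} (B : Mat3) {u : V3} (hu : ∀ i, u i ^ 2 ≤ M) :
    |quadG B u| ≤ 9 * M * entryNorm B := by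
  have huu : ∀ i j, |u i| * |u j| ≤ M := fun i j => by
    nlinarith [two_mul_le_add_sq |u i| |u j|, sq_abs (u i), sq_abs (u j), hu i, hu j]
  calc |quadG B u| = |∑ i, ∑ j, u i * B i j * u j| := by
        simp only [quadG, dotProduct, mulVec, Finset.mul_sum, mul_assoc]
    _ ≤ ∑ i, ∑ j, |u i| * |u j| * |B i j| := by
        refine (Finset.abs_sum_le_sum_abs _ _).trans (Finset.sum_le_sum fun i _ => ?_)
        refine (Finset.abs_sum_le_sum_abs _ _).trans (Finset.sum_le_sum fun j _ => ?_)
        rw [abs_mul, abs_mul]; linarith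
    _ ≤ ∑ _i : Fin 3, ∑ _j : Fin 3, M * entryNorm B := by
        gcongr with i _ j
        · exact (mul_nonneg (abs_nonneg _) (abs_nonneg _)).trans (huu 0 0)
        · exact huu i j
        · exact abs_apply_le_entryNorm B i j
    _ = 9 * M * entryNorm B := by simp; ring

lemma abs_deriv_hm_le_of_frame {A E : Mat3} (hA : A.PosSemidef) (hE : E * A * Eᵀ = 1)
    {p q : V3} (hh : 0 < hm p q A) (B : Mat3) :
    |p0 A p * p0 A q / (2 * hm p q A) * quadG B (fun i => p i / p0 A p - q i / p0 A q)| ≤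
      27 / 2 * entryNorm E ^ 2 * hm p q A * entryNorm B := by
  set u : V3 := fun i => p i / p0 A p - q i / p0 A q
  have hP := p0_pos hA p
  have hQ := p0_pos hA q
  have hcoef : 0 ≤ p0 A p * p0 A q / (2 * hm p q A) := by positivity
  have hBu := abs_quadG_le B (sq_apply_le_of_frame (isHermitian_iff_isSymm.mp hA.1) hE u)
  have hAu : quadG A u ≤ hm p q A ^ 2 / (p0 A p * p0 A q) := quadG_sub_div_p0_le hA p q
  calc _ = p0 A p * p0 A q / (2 * hm p q A) * |quadG B u| := by
        rw [abs_mul, abs_of_nonneg hcoef]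
    _ ≤ p0 A p * p0 A q / (2 * hm p q A) *
          (27 * entryNorm E ^ 2 * (hm p q A ^ 2 / (p0 A p * p0 A q)) * entryNorm B) := by
        have := entryNorm_nonneg B
        gcongr
        calc |quadG B u| ≤ 9 * (3 * entryNorm E ^ 2 * quadG A u) * entryNorm B := hBu
          _ = 27 * entryNorm E ^ 2 * quadG A u * entryNorm B := by ring
          _ ≤ _ := by gcongr
    _ = 27 / 2 * entryNorm E ^ 2 * hm p q A * entryNorm B := by
        field_simp

/-- at every symmetric positive definite `A` with `h(A) > 0`, the map
`A ↦ h(A)` has, in every symmetric direction `B`, directional derivative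
`Dh(A)[B] = (p⁰_A q⁰_A/(2h(A))) uᵀBu` where `u = p/p⁰_A − q/q⁰_A`, and there is an absolute
constant `C` such that for every orthonormal frame `E` for `A` (`E A Eᵀ = 1`),
`|Dh(A)[B]| ≤ C ‖e⁻¹‖² h(A) (p⁰_A q⁰_A)² max_{a,b}|B_{ab}|`. -/
theorem stmt9 :
    ∃ C > (0 : ℝ), ∀ (p q : V3) (A : Mat3), A.PosDef → 0 < hm p q A →
      ∀ B : Mat3, B.IsSymm →
        HasDerivAt (fun t : ℝ => hm p q (A + t • B))
          (p0 A p * p0 A q / (2 * hm p q A) *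
            quadG B (fun i => p i / p0 A p - q i / p0 A q)) 0 ∧
        ∀ E : Mat3, E * A * Eᵀ = 1 →
          |p0 A p * p0 A q / (2 * hm p q A) *
              quadG B (fun i => p i / p0 A p - q i / p0 A q)|
            ≤ C * entryNorm E ^ 2 * hm p q A * (p0 A p * p0 A q) ^ 2 * entryNorm B := by
  refine ⟨27 / 2, by norm_num, fun p q A hA hh B hB => ⟨?_, fun E hE => ?_⟩⟩
  · exact hasDerivAt_hm_add_smul hA.posSemidef hB hh
  · have hPQ : 1 ≤ (p0 A p * p0 A q) ^ 2 :=
      one_le_pow₀ (one_le_mul_of_one_le_of_one_le (one_le_p0 hA.posSemidef p)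
        (one_le_p0 hA.posSemidef q))
    have hrest : 0 ≤ 27 / 2 * entryNorm E ^ 2 * hm p q A * entryNorm B :=
      mul_nonneg (by positivity) (entryNorm_nonneg B)
    calc _ ≤ 27 / 2 * entryNorm E ^ 2 * hm p q A * entryNorm B :=
          abs_deriv_hm_le_of_frame hA.posSemidef hE hh B
      _ ≤ 27 / 2 * entryNorm E ^ 2 * hm p q A * entryNorm B * (p0 A p * p0 A q) ^ 2 :=
          le_mul_of_one_le_right hrest hPQ
      _ = _ := by ring
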